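/- Let θ be an n-qubit state that is logically contextual in some measurement scenario M, and let η be any m-qubit state. Define the (n+m)-qubit state θ⊗η by (θ⊗η) s = θ (the first n coordinates of s) · η (the last m coordinates of s), and similarly η⊗θ with the coordinate blocks swapped. Then, in the measurement scenario giving each θ-party its set M i and giving each η-party the single observable Z (e_Z⁺ = (1,0), e_Z⁻ = (0,1)), both θ⊗η and η⊗θ are logically contextual. -/
import Mathlib


open Complex Finset

/-- A local observable: a pair of vectors forming an orthonormal basis of ℂ². -/
structure Obs where
  eplus : Fin 2 → ℂ
  eminus : Fin 2 → ℂ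
  norm_plus : ∑ a : Fin 2, ‖eplus a‖ ^ 2 = 1
  norm_minus : ∑ a : Fin 2, ‖eminus a‖ ^ 2 = 1
  orth : ∑ a : Fin 2, (starRingEnd ℂ) (eplus a) * eminus a = 0

/-- Probability that context `c` yields joint outcome `o` on state `ψ`. -/
noncomputable def jointProb {n : ℕ} (ψ : (Fin n → Fin 2) → ℂ) (c : Fin n → Obs)
    (o : Fin n → Bool) : ℝ :=
  ‖∑ s : Fin n → Fin 2,
      (∏ i : Fin n,
        (starRingEnd ℂ) ((if o i then (c i).eplus else (c i).eminus) (s i))) * ψ s‖ ^ 2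

/-- A global assignment `g` is consistent if in every context of the scenario `M`
the induced joint outcome is possible. -/
def Consistent {n : ℕ} (ψ : (Fin n → Fin 2) → ℂ) (M : Fin n → Set Obs)
    (g : Fin n → Obs → Bool) : Prop :=
  ∀ c : Fin n → Obs, (∀ i, c i ∈ M i) → jointProb ψ c (fun i => g i (c i)) ≠ 0

def StronglyContextual {n : ℕ} (ψ : (Fin n → Fin 2) → ℂ) (M : Fin n → Set Obs) : Prop :=
  ¬ ∃ g : Fin n → Obs → Bool, Consistent ψ M g

def LogicallyContextual {n : ℕ} (ψ : (Fin n → Fin 2) → ℂ) (M : Fin n → Set Obs) : Prop :=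
  ∃ c : Fin n → Obs, (∀ i, c i ∈ M i) ∧ ∃ o : Fin n → Bool,
    jointProb ψ c o ≠ 0 ∧
    ¬ ∃ g : Fin n → Obs → Bool, Consistent ψ M g ∧ ∀ i, g i (c i) = o i

/-- The Pauli Z observable. -/
noncomputable def pauliZ : Obs where
  eplus := ![1, 0]
  eminus := ![0, 1]
  norm_plus := by simp [Fin.sum_univ_two]
  norm_minus := by simp [Fin.sum_univ_two]
  orth := by simp [Fin.sum_univ_two]

/-- The Pauli Y observable. -/
noncomputable def pauliY : Obs where
  eplus := ![((Real.sqrt 2)⁻¹ : ℝ), ((Real.sqrt 2)⁻¹ : ℝ) * Complex.I]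
  eminus := ![((Real.sqrt 2)⁻¹ : ℝ), -(((Real.sqrt 2)⁻¹ : ℝ) * Complex.I)]
  norm_plus := by
    have h : ‖(((Real.sqrt 2)⁻¹ : ℝ) : ℂ)‖ ^ 2 = 1 / 2 := by
      rw [Complex.norm_real, Real.norm_eq_abs, _root_.sq_abs, inv_pow,
        Real.sq_sqrt (by norm_num : (0:ℝ) ≤ 2)]
      norm_num
    simp [Fin.sum_univ_two, norm_mul, h]
    norm_num [h]
  norm_minus := by
    have h : ‖(((Real.sqrt 2)⁻¹ : ℝ) : ℂ)‖ ^ 2 = 1 / 2 := by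
      rw [Complex.norm_real, Real.norm_eq_abs, _root_.sq_abs, inv_pow,
        Real.sq_sqrt (by norm_num : (0:ℝ) ≤ 2)]
      norm_num
    simp [Fin.sum_univ_two, norm_mul, h]
    norm_num [h]
  orth := by
    have h : ((starRingEnd ℂ) (((Real.sqrt 2)⁻¹ : ℝ) : ℂ)) = (((Real.sqrt 2)⁻¹ : ℝ) : ℂ) :=
      Complex.conj_ofReal _
    simp [Fin.sum_univ_two, map_mul, Complex.conj_I, h]
    linear_combination (((Real.sqrt 2 : ℝ) : ℂ))⁻¹ * (((Real.sqrt 2 : ℝ) : ℂ))⁻¹ * Complex.I_mul_I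

/-- The Pauli X observable. -/
noncomputable def pauliX : Obs where
  eplus := ![((Real.sqrt 2)⁻¹ : ℝ), ((Real.sqrt 2)⁻¹ : ℝ)]
  eminus := ![((Real.sqrt 2)⁻¹ : ℝ), -(((Real.sqrt 2)⁻¹ : ℝ) : ℂ)]
  norm_plus := by
    have h : ‖(((Real.sqrt 2)⁻¹ : ℝ) : ℂ)‖ ^ 2 = 1 / 2 := by
      rw [Complex.norm_real, Real.norm_eq_abs, _root_.sq_abs, inv_pow,
        Real.sq_sqrt (by norm_num : (0:ℝ) ≤ 2)]
      norm_num
    simp [Fin.sum_univ_two, h]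
    norm_num [h]
  norm_minus := by
    have h : ‖(((Real.sqrt 2)⁻¹ : ℝ) : ℂ)‖ ^ 2 = 1 / 2 := by
      rw [Complex.norm_real, Real.norm_eq_abs, _root_.sq_abs, inv_pow,
        Real.sq_sqrt (by norm_num : (0:ℝ) ≤ 2)]
      norm_num
    simp [Fin.sum_univ_two, h]
    norm_num [h]
  orth := by
    have h : ((starRingEnd ℂ) (((Real.sqrt 2)⁻¹ : ℝ) : ℂ)) = (((Real.sqrt 2)⁻¹ : ℝ) : ℂ) :=
      Complex.conj_ofReal _
    simp [Fin.sum_univ_two, h]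


def appendEquiv (a b : ℕ) : ((Fin a → Fin 2) × (Fin b → Fin 2)) ≃ (Fin (a + b) → Fin 2) :=
  (Equiv.sumArrowEquivProdArrow _ _ _).symm.trans (Equiv.arrowCongr finSumFinEquiv (Equiv.refl _))

lemma appendEquiv_castAdd (a b : ℕ) (p : (Fin a → Fin 2) × (Fin b → Fin 2)) (i : Fin a) :
    appendEquiv a b p (Fin.castAdd b i) = p.1 i := by
  simp [appendEquiv, Equiv.sumArrowEquivProdArrow]

lemma appendEquiv_natAdd (a b : ℕ) (p : (Fin a → Fin 2) × (Fin b → Fin 2)) (j : Fin b) :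
    appendEquiv a b p (Fin.natAdd a j) = p.2 j := by
  simp [appendEquiv, Equiv.sumArrowEquivProdArrow]

lemma jointProb_tensor {a b : ℕ} (ψ₁ : (Fin a → Fin 2) → ℂ) (ψ₂ : (Fin b → Fin 2) → ℂ)
    (c : Fin (a + b) → Obs) (o : Fin (a + b) → Bool) :
    jointProb (fun s => ψ₁ (fun i => s (Fin.castAdd b i)) * ψ₂ (fun j => s (Fin.natAdd a j))) c o
      = jointProb ψ₁ (fun i => c (Fin.castAdd b i)) (fun i => o (Fin.castAdd b i))
        * jointProb ψ₂ (fun j => c (Fin.natAdd a j)) (fun j => o (Fin.natAdd a j)) := by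
  unfold jointProb
  rw [← mul_pow, ← norm_mul]
  congr 2
  conv_lhs => rw [← Equiv.sum_comp (appendEquiv a b)]
  rw [Fintype.sum_prod_type, Finset.sum_mul_sum]
  refine Finset.sum_congr rfl fun x _ => Finset.sum_congr rfl fun y _ => ?_
  rw [Fin.prod_univ_add]
  simp only [appendEquiv_castAdd, appendEquiv_natAdd]
  ring

lemma fin2cases (x : Fin 2) : x = 0 ∨ x = 1 := by fin_cases x <;> simp

lemma jointProb_pauliZ {b : ℕ} (ψ : (Fin b → Fin 2) → ℂ) (o : Fin b → Bool) :
    jointProb ψ (fun _ => pauliZ) o = ‖ψ (fun j => if o j then 0 else 1)‖ ^ 2 := by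
  unfold jointProb
  congr 2
  rw [Finset.sum_eq_single (fun j => if o j then (0 : Fin 2) else 1)]
  · rw [Finset.prod_eq_one, one_mul]
    intro j _
    cases h : o j <;> simp [h, pauliZ]
  · intro s _ hs
    have : ∃ j, s j ≠ (fun j => if o j then (0 : Fin 2) else 1) j := by
      by_contra hc
      push_neg at hc
      exact hs (funext hc)
    obtain ⟨j, hj⟩ := this
    rw [Finset.prod_eq_zero (Finset.mem_univ j), zero_mul]
    cases h : o j <;> simp only [h] at hj ⊢ <;> rcases fin2cases (s j) with h2 | h2 <;>
      simp [h2, pauliZ] at hj ⊢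
  · simp

lemma eta_ne (m : ℕ) (η : (Fin m → Fin 2) → ℂ) (hη : ∑ s : Fin m → Fin 2, ‖η s‖ ^ 2 = 1) :
    ∃ t, η t ≠ 0 := by
  by_contra h
  push_neg at h
  simp [h] at hη

/-- Tensoring with an arbitrary state preserves logical contextuality: if the `n`-qubit
state `θ` is logically contextual in scenario `M` and `η` is any `m`-qubit state, then
`θ ⊗ η` and `η ⊗ θ` are logically contextual in the scenario giving each `θ`-party its
set `M i` and each `η`-party the single observable Pauli Z. -/
theorem tensor_logicallyContextual (n m : ℕ) (θ : (Fin n → Fin 2) → ℂ)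
    (hθ : ∑ s : Fin n → Fin 2, ‖θ s‖ ^ 2 = 1)
    (η : (Fin m → Fin 2) → ℂ)
    (hη : ∑ s : Fin m → Fin 2, ‖η s‖ ^ 2 = 1)
    (M : Fin n → Set Obs) (hMfin : ∀ i, (M i).Finite) (hMne : ∀ i, (M i).Nonempty)
    (hLC : LogicallyContextual θ M) :
    LogicallyContextual
      (fun s : Fin (n + m) → Fin 2 =>
        θ (fun i : Fin n => s (Fin.castAdd m i)) * η (fun j : Fin m => s (Fin.natAdd n j)))
      (fun i : Fin (n + m) =>
        if h : (i : ℕ) < n then M ⟨i, h⟩ else ({pauliZ} : Set Obs)) ∧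
    LogicallyContextual
      (fun s : Fin (m + n) → Fin 2 =>
        η (fun j : Fin m => s (Fin.castAdd n j)) * θ (fun i : Fin n => s (Fin.natAdd m i)))
      (fun i : Fin (m + n) =>
        if h : (i : ℕ) < m then ({pauliZ} : Set Obs)
        else M ⟨(i : ℕ) - m, by have := i.isLt; omega⟩) := by
  obtain ⟨c, hc, o, ho, hng⟩ := hLC
  obtain ⟨t, ht⟩ := eta_ne m η hη
  constructor
  · refine ⟨fun i => if h : (i : ℕ) < n then c ⟨i, h⟩ else pauliZ, ?_,
      fun i => if h : (i : ℕ) < n then o ⟨i, h⟩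
        else decide (t ⟨(i : ℕ) - n, by have := i.isLt; omega⟩ = 0), ?_, ?_⟩
    · intro i
      by_cases hi : (i : ℕ) < n
      · simpa [hi] using hc _
      · simp [hi]
    · have e1 : (fun i : Fin n =>
          (fun i : Fin (n+m) => if h : (i : ℕ) < n then c ⟨i, h⟩ else pauliZ)
            (Fin.castAdd m i)) = c := by
        funext i; simp [i.isLt]
      have e2 : (fun i : Fin n =>
          (fun i : Fin (n+m) => if h : (i : ℕ) < n then o ⟨i, h⟩
            else decide (t ⟨(i : ℕ) - n, by have := i.isLt; omega⟩ = 0))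
            (Fin.castAdd m i)) = o := by
        funext i; simp [i.isLt]
      have e3 : (fun j : Fin m =>
          (fun i : Fin (n+m) => if h : (i : ℕ) < n then c ⟨i, h⟩ else pauliZ)
            (Fin.natAdd n j)) = fun _ => pauliZ := by
        funext j; simp only [Fin.coe_natAdd]; rw [dif_neg (by omega)]
      have e4 : (fun j : Fin m =>
          (fun i : Fin (n+m) => if h : (i : ℕ) < n then o ⟨i, h⟩
            else decide (t ⟨(i : ℕ) - n, by have := i.isLt; omega⟩ = 0))
            (Fin.natAdd n j)) = fun j => decide (t j = 0) := by
        funext j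
        simp only [Fin.coe_natAdd]
        rw [dif_neg (by omega)]
        have hj : (⟨n + (j : ℕ) - n, by omega⟩ : Fin m) = j := by
          apply Fin.ext; simp
        exact congrArg (fun x => decide (t x = 0)) hj
      rw [jointProb_tensor, e1, e2, e3, e4, jointProb_pauliZ]
      have e5 : (fun j : Fin m => if decide (t j = 0) = true then (0 : Fin 2) else 1) = t := by
        funext j; rcases fin2cases (t j) with h | h <;> simp [h]
      rw [e5]
      exact mul_ne_zero ho (pow_ne_zero _ (norm_ne_zero_iff.mpr ht))
    · rintro ⟨g', hg'cons, hg'eq⟩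
      apply hng
      refine ⟨fun i ob => g' (Fin.castAdd m i) ob, ?_, ?_⟩
      · intro c₀ hc₀
        have hC : ∀ i : Fin (n+m),
            (fun i : Fin (n+m) => if h : (i : ℕ) < n then c₀ ⟨i, h⟩ else pauliZ) i
              ∈ (if h : (i : ℕ) < n then M ⟨i, h⟩ else ({pauliZ} : Set Obs)) := by
          intro i
          by_cases hi : (i : ℕ) < n
          · simpa [hi] using hc₀ _
          · simp [hi]
        have := hg'cons _ hC
        rw [jointProb_tensor] at this
        simp only [Fin.coe_castAdd, Fin.is_lt, dite_true, Fin.eta] at this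
        exact left_ne_zero_of_mul this
      · intro i
        have := hg'eq (Fin.castAdd m i)
        simpa [i.isLt] using this
  · refine ⟨fun i => if h : (i : ℕ) < m then pauliZ
        else c ⟨(i : ℕ) - m, by have := i.isLt; omega⟩, ?_,
      fun i => if h : (i : ℕ) < m then decide (t ⟨i, h⟩ = 0)
        else o ⟨(i : ℕ) - m, by have := i.isLt; omega⟩, ?_, ?_⟩
    · intro i
      by_cases hi : (i : ℕ) < m
      · simp [hi]
      · simpa [hi] using hc _
    · have e1 : (fun j : Fin m =>
          (fun i : Fin (m+n) => if h : (i : ℕ) < m then pauliZ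
            else c ⟨(i : ℕ) - m, by have := i.isLt; omega⟩) (Fin.castAdd n j))
          = fun _ => pauliZ := by
        funext j; simp [j.isLt]
      have e2 : (fun j : Fin m =>
          (fun i : Fin (m+n) => if h : (i : ℕ) < m then decide (t ⟨i, h⟩ = 0)
            else o ⟨(i : ℕ) - m, by have := i.isLt; omega⟩) (Fin.castAdd n j))
          = fun j => decide (t j = 0) := by
        funext j; simp [j.isLt]
      have e3 : (fun i : Fin n =>
          (fun i : Fin (m+n) => if h : (i : ℕ) < m then pauliZ
            else c ⟨(i : ℕ) - m, by have := i.isLt; omega⟩) (Fin.natAdd m i)) = c := by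
        funext i
        simp only [Fin.coe_natAdd]
        rw [dif_neg (by omega)]
        exact congrArg c (Fin.ext (by simp))
      have e4 : (fun i : Fin n =>
          (fun i : Fin (m+n) => if h : (i : ℕ) < m then decide (t ⟨i, h⟩ = 0)
            else o ⟨(i : ℕ) - m, by have := i.isLt; omega⟩) (Fin.natAdd m i)) = o := by
        funext i
        simp only [Fin.coe_natAdd]
        rw [dif_neg (by omega)]
        exact congrArg o (Fin.ext (by simp))
      rw [jointProb_tensor, e1, e2, e3, e4, jointProb_pauliZ]
      have e5 : (fun j : Fin m => if decide (t j = 0) = true then (0 : Fin 2) else 1) = t := by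
        funext j; rcases fin2cases (t j) with h | h <;> simp [h]
      rw [e5]
      exact mul_ne_zero (pow_ne_zero _ (norm_ne_zero_iff.mpr ht)) ho
    · rintro ⟨g', hg'cons, hg'eq⟩
      apply hng
      refine ⟨fun i ob => g' (Fin.natAdd m i) ob, ?_, ?_⟩
      · intro c₀ hc₀
        have hC : ∀ i : Fin (m+n),
            (fun i : Fin (m+n) => if h : (i : ℕ) < m then pauliZ
              else c₀ ⟨(i : ℕ) - m, by have := i.isLt; omega⟩) i
              ∈ (if h : (i : ℕ) < m then ({pauliZ} : Set Obs)
                else M ⟨(i : ℕ) - m, by have := i.isLt; omega⟩) := by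
          intro i
          by_cases hi : (i : ℕ) < m
          · simp [hi]
          · simpa [hi] using hc₀ _
        have := hg'cons _ hC
        rw [jointProb_tensor] at this
        have ept : ∀ i : Fin n,
            (fun i : Fin (m+n) => if h : (i : ℕ) < m then pauliZ
              else c₀ ⟨(i : ℕ) - m, by have := i.isLt; omega⟩) (Fin.natAdd m i) = c₀ i := by
          intro i
          simp only [Fin.coe_natAdd]
          rw [dif_neg (by omega)]
          exact congrArg c₀ (Fin.ext (by simp))
        have e : (fun i : Fin n =>
            (fun i : Fin (m+n) => if h : (i : ℕ) < m then pauliZ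
              else c₀ ⟨(i : ℕ) - m, by have := i.isLt; omega⟩) (Fin.natAdd m i)) = c₀ :=
          funext ept
        have e' : (fun i : Fin n => g' (Fin.natAdd m i)
            ((fun i : Fin (m+n) => if h : (i : ℕ) < m then pauliZ
              else c₀ ⟨(i : ℕ) - m, by have := i.isLt; omega⟩) (Fin.natAdd m i)))
            = fun i => g' (Fin.natAdd m i) (c₀ i) :=
          funext fun i => congrArg _ (ept i)
        rw [e', e] at this
        exact right_ne_zero_of_mul this
      · intro i
        have h1 : (fun i : Fin (m+n) => if h : (i : ℕ) < m then pauliZ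
            else c ⟨(i : ℕ) - m, by have := i.isLt; omega⟩) (Fin.natAdd m i) = c i := by
          simp only [Fin.coe_natAdd]
          rw [dif_neg (by omega)]
          exact congrArg c (Fin.ext (by simp))
        have h2 : (fun i : Fin (m+n) => if h : (i : ℕ) < m then decide (t ⟨i, h⟩ = 0)
            else o ⟨(i : ℕ) - m, by have := i.isLt; omega⟩) (Fin.natAdd m i) = o i := by
          simp only [Fin.coe_natAdd]
          rw [dif_neg (by omega)]
          exact congrArg o (Fin.ext (by simp))
        have := hg'eq (Fin.natAdd m i)
        rw [h1, h2] at this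
        exact this
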